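/- arXiv:2506.03814 — 8 statements merged into one kernel-verified Lean document; each statement's English description precedes it below -/
import Mathlib

section
/- Let w be a word and u a jumbled scattered factor of w. Then u is a jumbled scattered factor of w with ℓ jumbles for every ℓ in the interval [δ_w(u), |u|−1]. -/
open List

variable {α : Type*}

/-- Parikh vector comparison: `u` has at most as many occurrences of each letter as `w`. -/
def ParikhLE [DecidableEq α] (u w : List α) : Prop :=
  ∀ a : α, u.count a ≤ w.count a

/-- `u` is a jumbled scattered factor of `w` with `ℓ` jumbles. -/
def JSF [DecidableEq α] (w : List α) (ℓ : ℕ) (u : List α) : Prop :=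
  ParikhLE u w ∧ ∃ v : List α, v.Sublist u ∧ v.Sublist w ∧ v.length + ℓ = u.length

/-- The jumble index `δ_w(u)`: minimal number of jumbles. -/
noncomputable def jumbleIndex [DecidableEq α] (w u : List α) : ℕ :=
  sInf {ℓ : ℕ | JSF w ℓ u}

/-- Length of a longest common scattered factor (subsequence) of `u` and `w`. -/
noncomputable def lcsf (u w : List α) : ℕ :=
  sSup {n : ℕ | ∃ v : List α, v.Sublist u ∧ v.Sublist w ∧ v.length = n}

/-- Length-`k` jumbled scattered factors of `w` with `ℓ` jumbles. -/
def JScatFactK [DecidableEq α] (k : ℕ) (w : List α) (ℓ : ℕ) : Set (List α) :=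
  {u | u.length = k ∧ JSF w ℓ u}

/-- Jumbled scattered factors of `w` of length at most `k` with `ℓ` jumbles. -/
def JScatFactLe [DecidableEq α] (k : ℕ) (w : List α) (ℓ : ℕ) : Set (List α) :=
  {u | u.length ≤ k ∧ JSF w ℓ u}

/-- Universality index `ι(w)`: largest `k` with `Σ^k ⊆ ScatFact(w)`. -/
noncomputable def univIndex (α : Type*) [Fintype α] (w : List α) : ℕ :=
  sSup {k : ℕ | ∀ u : List α, u.length = k → u.Sublist w}

/-- Minimal number of occurrences of a letter in `w`. -/
noncomputable def minCount (α : Type*) [Fintype α] [DecidableEq α] [Nonempty α]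
    (w : List α) : ℕ :=
  Finset.univ.inf' Finset.univ_nonempty (fun a : α => w.count a)

theorem stmt3 [Fintype α] [DecidableEq α] (u w : List α) (hp : ParikhLE u w)
    (ℓ : ℕ) (h1 : jumbleIndex w u ≤ ℓ) (h2 : ℓ ≤ u.length - 1) :
    JSF w ℓ u := by
  have hne : JSF w u.length u := ⟨hp, [], nil_sublist _, nil_sublist _, by simp⟩
  have hmem : JSF w (jumbleIndex w u) u :=
    Nat.sInf_mem (s := {ℓ : ℕ | JSF w ℓ u}) ⟨u.length, hne⟩
  obtain ⟨-, v, hvu, hvw, hlen⟩ := hmem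
  have hℓu : ℓ ≤ u.length := le_trans h2 (Nat.sub_le _ _)
  have hle : u.length - ℓ ≤ v.length := by omega
  refine ⟨hp, v.take (u.length - ℓ), (take_sublist _ _).trans hvu,
    (take_sublist _ _).trans hvw, ?_⟩
  rw [length_take]
  omega
end

section
/- If uv (the concatenation of u and v) is a jumbled scattered factor of w, then δ_w(uv) ≥ δ_w(u) + δ_w(v). -/
open List

variable {α : Type*}

theorem stmt6 [Fintype α] [DecidableEq α] (u v w : List α)
    (h : ParikhLE (u ++ v) w) :
    jumbleIndex w u + jumbleIndex w v ≤ jumbleIndex w (u ++ v) := by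
  have hu : ParikhLE u w := fun a => le_trans (by simp [List.count_append]) (h a)
  have hv : ParikhLE v w := fun a => le_trans (by simp [List.count_append]) (h a)
  have hne : {ℓ : ℕ | JSF w ℓ (u ++ v)}.Nonempty :=
    ⟨(u ++ v).length, h, [], List.nil_sublist _, List.nil_sublist _, by simp⟩
  have hmem : JSF w (jumbleIndex w (u ++ v)) (u ++ v) := Nat.sInf_mem hne
  obtain ⟨-, s, hs1, hs2, hs3⟩ := hmem
  rw [List.sublist_append_iff] at hs1
  obtain ⟨s1, s2, rfl, hsu, hsv⟩ := hs1
  have h1 : jumbleIndex w u ≤ u.length - s1.length := by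
    apply Nat.sInf_le
    have hlen : s1.length ≤ u.length := hsu.length_le
    exact ⟨hu, s1, hsu, ((List.sublist_append_left s1 s2).trans hs2), by omega⟩
  have h2 : jumbleIndex w v ≤ v.length - s2.length := by
    apply Nat.sInf_le
    have hlen : s2.length ≤ v.length := hsv.length_le
    exact ⟨hv, s2, hsv, ((List.sublist_append_right s1 s2).trans hs2), by omega⟩
  have l1 : s1.length ≤ u.length := hsu.length_le
  have l2 : s2.length ≤ v.length := hsv.length_le
  simp only [List.length_append] at hs3
  omega
end

section
/- If u is a jumbled scattered factor of w and v is a jumbled scattered factor of w', then uv is a jumbled scattered factor of ww', and min(δ_w(u), δ_{w'}(v)) ≤ δ_{ww'}(uv) ≤ δ_w(u) + δ_{w'}(v). -/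
open List

variable {α : Type*}

theorem stmt7 [Fintype α] [DecidableEq α] (u v w w' : List α)
    (hu : ParikhLE u w) (hv : ParikhLE v w') :
    ParikhLE (u ++ v) (w ++ w') ∧
      min (jumbleIndex w u) (jumbleIndex w' v) ≤ jumbleIndex (w ++ w') (u ++ v) ∧
      jumbleIndex (w ++ w') (u ++ v) ≤ jumbleIndex w u + jumbleIndex w' v := by
  have hP : ParikhLE (u ++ v) (w ++ w') := by
    intro a; simp only [List.count_append]; exact Nat.add_le_add (hu a) (hv a)
  have hne : {ℓ : ℕ | JSF (w ++ w') ℓ (u ++ v)}.Nonempty :=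
    ⟨(u ++ v).length, hP, [], nil_sublist _, nil_sublist _, by simp⟩
  have hne1 : {ℓ : ℕ | JSF w ℓ u}.Nonempty :=
    ⟨u.length, hu, [], nil_sublist _, nil_sublist _, by simp⟩
  have hne2 : {ℓ : ℕ | JSF w' ℓ v}.Nonempty :=
    ⟨v.length, hv, [], nil_sublist _, nil_sublist _, by simp⟩
  refine ⟨hP, ?_, ?_⟩
  · apply le_csInf hne
    rintro ℓ ⟨-, c, hcu, hcw, hlen⟩
    obtain ⟨a, b, rfl, hau, hbv⟩ := List.sublist_append_iff.mp hcu
    obtain ⟨c1, c2, heq, hc1, hc2⟩ := List.sublist_append_iff.mp hcw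
    have hlenab : a.length + b.length = c1.length + c2.length := by
      have := congrArg List.length heq; simpa using this
    have hua := hau.length_le
    have hvb := hbv.length_le
    simp only [List.length_append] at hlen
    rcases le_or_gt a.length c1.length with h | h
    · have haw : a.Sublist w := by
        have hp : a <+: c1 :=
          List.prefix_of_prefix_length_le (heq ▸ List.prefix_append a b)
            (List.prefix_append c1 c2) h
        exact hp.sublist.trans hc1
      have hδ1 : jumbleIndex w u ≤ u.length - a.length :=
        Nat.sInf_le ⟨hu, a, hau, haw, by omega⟩
      calc min (jumbleIndex w u) (jumbleIndex w' v) ≤ jumbleIndex w u := min_le_left _ _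
        _ ≤ u.length - a.length := hδ1
        _ ≤ ℓ := by omega
    · have hbw : b.Sublist w' := by
        have hs : b <:+ c2 :=
          List.suffix_of_suffix_length_le (heq ▸ List.suffix_append a b)
            (List.suffix_append c1 c2) (by omega)
        exact hs.sublist.trans hc2
      have hδ2 : jumbleIndex w' v ≤ v.length - b.length :=
        Nat.sInf_le ⟨hv, b, hbv, hbw, by omega⟩
      calc min (jumbleIndex w u) (jumbleIndex w' v) ≤ jumbleIndex w' v := min_le_right _ _
        _ ≤ v.length - b.length := hδ2
        _ ≤ ℓ := by omega
  · obtain ⟨-, c1, hc1u, hc1w, hl1⟩ := Nat.sInf_mem hne1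
    obtain ⟨-, c2, hc2v, hc2w, hl2⟩ := Nat.sInf_mem hne2
    apply Nat.sInf_le
    refine ⟨hP, c1 ++ c2, hc1u.append hc2v, hc1w.append hc2w, ?_⟩
    simp only [List.length_append, jumbleIndex]; omega
end

section
/- For a word w, a jumbled scattered factor u of w, and a letter x with p(ux) ≤ p(w), we have δ_w(ux) − δ_w(u) ≤ 1. -/
open List

variable {α : Type*}

theorem stmt8 [Fintype α] [DecidableEq α] (u w : List α) (x : α)
    (hu : ParikhLE u w) (hux : ParikhLE (u ++ [x]) w) :
    jumbleIndex w (u ++ [x]) - jumbleIndex w u ≤ 1 := by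
  have hne : {ℓ : ℕ | JSF w ℓ u}.Nonempty :=
    ⟨u.length, hu, [], nil_sublist _, nil_sublist _, by simp⟩
  obtain ⟨-, v, hvu, hvw, hlen⟩ := Nat.sInf_mem hne
  have hmem : JSF w (jumbleIndex w u + 1) (u ++ [x]) :=
    ⟨hux, v, hvu.trans (sublist_append_left u [x]), hvw, by
      simp only [length_append, length_cons, length_nil]
      change v.length + (sInf {ℓ : ℕ | JSF w ℓ u} + 1) = _
      omega⟩
  have h2 : jumbleIndex w (u ++ [x]) ≤ jumbleIndex w u + 1 := Nat.sInf_le hmem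
  omega
end

section
/- Let w be a word, k, ℓ ∈ ℕ. If there exist a letter a with |w|_a ≥ k, an integer k' ≥ k − ℓ, and words x, y with w = x a^{k'} y, then w ∼^J_{k,ℓ} x a^{k'+1} y; consequently the equivalence class of w under ∼^J_{k,ℓ} is infinite. -/
/-!
Lengthening the block `a^{k'}` only adds occurrences of `a`. A word `u` of length at most `k` never
needs them: its Parikh condition on `a` already holds since `|u|_a ≤ k ≤ |w|_a`, and a common
subsequence of `u` and the longer word has length `|u| - ℓ ≤ k - ℓ ≤ k'`, so it uses at most `k'`
letters of the block and embeds into `w` as well. Hence every `x a^m y` with `m ≥ k'` has the same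
jumbled scattered factors, and these words are pairwise distinct.
-/

open List

variable {α : Type*}

theorem List.Sublist.sublist_append_replicate_append_of_length_le {x y v : List α} {a : α}
    {m n : ℕ} (hv : v <+ x ++ replicate m a ++ y) (hlen : v.length ≤ n) :
    v <+ x ++ replicate n a ++ y := by
  rw [append_assoc] at hv ⊢
  obtain ⟨v₁, v₂₃, rfl, h₁, h₂₃⟩ := sublist_append_iff.mp hv
  obtain ⟨v₂, v₃, rfl, h₂, h₃⟩ := sublist_append_iff.mp h₂₃
  obtain ⟨r, -, rfl⟩ := sublist_replicate_iff.mp h₂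
  refine h₁.append (Sublist.append ?_ h₃)
  simp only [length_append, length_replicate] at hlen
  exact replicate_sublist_replicate a |>.mpr (by omega)

section JumbledScatteredFactors

variable [DecidableEq α]

theorem ParikhLE.append_replicate_append {x y u : List α} {a : α} {m n : ℕ}
    (hu : ParikhLE u (x ++ replicate m a ++ y))
    (ha : u.count a ≤ (x ++ replicate n a ++ y).count a) :
    ParikhLE u (x ++ replicate n a ++ y) := by
  intro b
  by_cases hb : b = a
  · exact hb ▸ ha
  · have hab : (a == b) = false := beq_false_of_ne (Ne.symm hb)
    simpa only [count_append, count_replicate, hab, Bool.false_eq_true, if_false] using hu b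

theorem JSF.mono {w w' u : List α} {ℓ : ℕ} (hu : JSF w ℓ u) (hw : w <+ w') : JSF w' ℓ u :=
  let ⟨hp, v, hvu, hvw, hvl⟩ := hu
  ⟨fun b => (hp b).trans (hw.count_le b), v, hvu, hvw.trans hw, hvl⟩

theorem JScatFactLe_mono {w w' : List α} (k ℓ : ℕ) (hw : w <+ w') :
    JScatFactLe k w ℓ ⊆ JScatFactLe k w' ℓ :=
  fun _ ⟨hlen, hu⟩ => ⟨hlen, hu.mono hw⟩

theorem JScatFactLe_append_replicate_append_eq {x y : List α} {a : α} {k ℓ n m : ℕ}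
    (ha : k ≤ (x ++ replicate n a ++ y).count a) (hn : k - ℓ ≤ n) (hnm : n ≤ m) :
    JScatFactLe k (x ++ replicate n a ++ y) ℓ = JScatFactLe k (x ++ replicate m a ++ y) ℓ := by
  refine (JScatFactLe_mono k ℓ ?_).antisymm ?_
  · exact (Sublist.refl x).append (replicate_sublist_replicate a |>.mpr hnm) |>.append
      (Sublist.refl y)
  · rintro u ⟨hlen, hp, v, hvu, hvw, hvl⟩
    refine ⟨hlen, hp.append_replicate_append ?_, v, hvu, ?_, hvl⟩
    · exact count_le_length.trans (hlen.trans ha)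
    · exact hvw.sublist_append_replicate_append_of_length_le (by omega)

end JumbledScatteredFactors

theorem stmt12_general [DecidableEq α] (w x y : List α) (a : α) (k ℓ k' : ℕ)
    (ha : k ≤ w.count a) (hk' : k - ℓ ≤ k')
    (hw : w = x ++ List.replicate k' a ++ y) :
    JScatFactLe k w ℓ = JScatFactLe k (x ++ List.replicate (k' + 1) a ++ y) ℓ ∧
      {v : List α | JScatFactLe k v ℓ = JScatFactLe k w ℓ}.Infinite := by
  subst hw
  refine ⟨JScatFactLe_append_replicate_append_eq ha hk' k'.le_succ, ?_⟩
  refine Set.infinite_of_injective_forall_mem (f := fun n => x ++ replicate (k' + n) a ++ y)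
    (fun m n hmn => ?_) (fun n => ?_)
  · simpa using congrArg length hmn
  · exact (JScatFactLe_append_replicate_append_eq ha hk' (k'.le_add_right n)).symm

theorem stmt12 [Fintype α] [DecidableEq α] (w x y : List α) (a : α) (k ℓ k' : ℕ)
    (hk : 1 ≤ k) (hℓ : 1 ≤ ℓ)
    (ha : k ≤ w.count a) (hk' : k - ℓ ≤ k')
    (hw : w = x ++ List.replicate k' a ++ y) :
    JScatFactLe k w ℓ = JScatFactLe k (x ++ List.replicate (k' + 1) a ++ y) ℓ ∧
      {v : List α | JScatFactLe k v ℓ = JScatFactLe k w ℓ}.Infinite :=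
  stmt12_general w x y a k ℓ k' ha hk' hw
end

section
/- Let w be a word, k with k+1 ≤ min over letters a of |w|_a (so every letter occurs at least k+1 times in w), and ℓ ∈ ℕ. If JScatFact_k(w, ℓ) = Σ^k (every word of length k is a jumbled scattered factor of w with ℓ jumbles), then JScatFact_{k+1}(w, ℓ+1) = Σ^{k+1}. -/
open List

variable {α : Type*}

theorem parikhLE_of_length_le [DecidableEq α] {u w : List α}
    (h : ∀ a : α, u.length ≤ w.count a) : ParikhLE u w :=
  fun a => u.count_le_length.trans (h a)

theorem JSF.cons [DecidableEq α] {w u : List α} {ℓ : ℕ} {a : α} (h : JSF w ℓ u)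
    (hp : ParikhLE (a :: u) w) : JSF w (ℓ + 1) (a :: u) := by
  obtain ⟨-, v, hvu, hvw, hlen⟩ := h
  exact ⟨hp, v, hvu.cons a, hvw, by simp [← hlen, Nat.add_assoc]⟩

theorem stmt14_general [DecidableEq α] (w : List α) (k ℓ : ℕ)
    (hcount : ∀ a : α, k + 1 ≤ w.count a)
    (h : JScatFactK k w ℓ = {u : List α | u.length = k}) :
    JScatFactK (k + 1) w (ℓ + 1) = {u : List α | u.length = k + 1} := by
  ext u
  refine ⟨And.left, fun hu => ?_⟩
  obtain ⟨a, t, rfl⟩ := List.exists_cons_of_length_eq_add_one hu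
  have ht : t ∈ JScatFactK k w ℓ := by
    rw [h]
    simpa using hu
  exact ⟨hu, ht.2.cons (parikhLE_of_length_le fun b => hu ▸ hcount b)⟩

theorem stmt14 [Fintype α] [DecidableEq α] (w : List α) (k ℓ : ℕ)
    (hcount : ∀ a : α, k + 1 ≤ w.count a)
    (h : JScatFactK k w ℓ = {u : List α | u.length = k}) :
    JScatFactK (k + 1) w (ℓ + 1) = {u : List α | u.length = k + 1} :=
  stmt14_general w k ℓ hcount h
end

section
/- For every word w over a finite alphabet Σ and every k in the interval [ι(w), min over a∈Σ of |w|_a], the union over ℓ' ∈ [0, k − ι(w)] of JScatFact_k(w, ℓ') equals Σ^k. That is, at most k − ι(w) jumbles suffice to obtain all words of length k. -/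
open List

variable {α : Type*}

/-!
The prefix of length `ι(w)` of any `u` is a scattered factor of `w`, and `|u| = k ≤ min_a |w|_a`
gives `p(u) ≤ p(w)`; so `u` is reached from that prefix with `k - ι(w)` jumbles.
-/

/-- When `{k | Σ^k ⊆ ScatFact(w)}` is unbounded (only possible for empty `α`), `sSup` is the
junk value `0`, and the claim still holds since the only word of length `0` is `[]`. -/
theorem sublist_of_length_eq_univIndex [Fintype α] {w u : List α}
    (hu : u.length = univIndex α w) : u.Sublist w := by
  by_cases hbdd : BddAbove {k : ℕ | ∀ u : List α, u.length = k → u.Sublist w}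
  · have hne : ({k : ℕ | ∀ u : List α, u.length = k → u.Sublist w}).Nonempty :=
      ⟨0, fun u hu => by simp [List.length_eq_zero_iff.mp hu]⟩
    exact Nat.sSup_mem hne hbdd u hu
  · rw [univIndex, Nat.sSup_of_not_bddAbove hbdd, List.length_eq_zero_iff] at hu
    simp [hu]

theorem parikhLE_of_length_le_minCount [Fintype α] [DecidableEq α] [Nonempty α]
    {u w : List α} (hu : u.length ≤ minCount α w) : ParikhLE u w := fun a =>
  calc u.count a ≤ u.length := List.count_le_length
    _ ≤ minCount α w := hu
    _ ≤ w.count a := Finset.inf'_le _ (Finset.mem_univ a)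

theorem jsf_of_take_sublist [DecidableEq α] {u w : List α} {m : ℕ} (hp : ParikhLE u w)
    (hm : m ≤ u.length) (htake : (u.take m).Sublist w) : JSF w (u.length - m) u :=
  ⟨hp, u.take m, List.take_sublist _ _, htake, by simp [hm]⟩

theorem stmt15 [Fintype α] [DecidableEq α] [Nonempty α] (w : List α) (k : ℕ)
    (h1 : univIndex α w ≤ k) (h2 : k ≤ minCount α w) :
    (⋃ ℓ' ∈ {ℓ' : ℕ | ℓ' ≤ k - univIndex α w}, JScatFactK k w ℓ') =
      {u : List α | u.length = k} := by
  ext u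
  simp only [Set.mem_iUnion, Set.mem_ofPred_eq]
  refine ⟨fun ⟨_, _, hu, _⟩ => hu, fun hu => ⟨k - univIndex α w, le_rfl, hu, ?_⟩⟩
  subst hu
  exact jsf_of_take_sublist (parikhLE_of_length_le_minCount h2) h1
    (sublist_of_length_eq_univIndex (by simp [h1]))
end

section
/- Let w with ι(w) = k and |w|_a ≥ k+1 for every letter a ∈ Σ. Then ScatFact_{k+1}(w, 0-jumbles) ∪ SJSF_{k+1}(w, 1) = Σ^{k+1}, i.e., every word of length k+1 is either a scattered factor of w or has jumble index exactly 1 with respect to w, so every word of length k+1 is a jumbled scattered factor of w with at most one jumble. -/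
open List

variable {α : Type*}

theorem stmt17 [Fintype α] [DecidableEq α] (w : List α) (k : ℕ)
    (hι : univIndex α w = k) (hcount : ∀ a : α, k + 1 ≤ w.count a) :
    ({u : List α | u.length = k + 1 ∧ u.Sublist w} ∪
        {u : List α | u.length = k + 1 ∧ ParikhLE u w ∧ jumbleIndex w u = 1}) =
      {u : List α | u.length = k + 1} := by
  ext u
  simp only [Set.mem_union, Set.mem_setOf_eq]
  constructor
  · rintro (⟨h, _⟩ | ⟨h, _⟩) <;> exact h
  · intro hlen
    by_cases hsub : u.Sublist w
    · exact Or.inl ⟨hlen, hsub⟩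
    have hu_ne : u ≠ [] := by
      intro h; rw [h] at hlen; simp at hlen
    have a : α := u.head hu_ne
    have hple : ParikhLE u w := by
      intro b
      calc u.count b ≤ u.length := List.count_le_length
        _ ≤ w.count b := by rw [hlen]; exact hcount b
    -- every word of length k is a sublist of w
    have hk : ∀ x : List α, x.length = k → x.Sublist w := by
      rcases Nat.eq_zero_or_pos k with rfl | hkpos
      · intro x hx
        rw [List.length_eq_zero_iff.mp hx]
        exact List.nil_sublist w
      · have hne : {m : ℕ | ∀ x : List α, x.length = m → x.Sublist w}.Nonempty := by
          refine ⟨0, fun x hx => ?_⟩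
          rw [List.length_eq_zero_iff.mp hx]
          exact List.nil_sublist w
        have hbdd : BddAbove {m : ℕ | ∀ x : List α, x.length = m → x.Sublist w} := by
          refine ⟨w.length, fun m hm => ?_⟩
          have := (hm (List.replicate m a) List.length_replicate).length_le
          simpa using this
        have hmem := Nat.sSup_mem hne hbdd
        rw [show sSup {m : ℕ | ∀ x : List α, x.length = m → x.Sublist w} = k from hι] at hmem
        exact hmem
    have h1 : JSF w 1 u := by
      refine ⟨hple, u.dropLast, List.dropLast_sublist u, ?_, ?_⟩
      · exact hk _ (by rw [List.length_dropLast, hlen]; rfl)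
      · rw [List.length_dropLast, hlen]; omega
    have h0 : ¬ JSF w 0 u := by
      rintro ⟨_, v, hvu, hvw, hlen0⟩
      have : v = u := hvu.eq_of_length (by omega)
      exact hsub (this ▸ hvw)
    refine Or.inr ⟨hlen, hple, ?_⟩
    refine le_antisymm (Nat.sInf_le h1) ?_
    refine Nat.one_le_iff_ne_zero.mpr fun h => ?_
    rcases Nat.sInf_eq_zero.mp h with h' | h'
    · exact h0 h'
    · have : (1 : ℕ) ∈ {ℓ : ℕ | JSF w ℓ u} := h1
      rw [h'] at this
      exact this
end
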